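/- Fix an integer t ≥ 1. In the ring of multivariate formal power series over ℤ in variables x_0, …, x_t, let S be the series whose coefficient at the monomial x^z = x_0^{z_0}⋯x_t^{z_t} (for z ∈ ℕ^{t+1}) is 1 if z ∈ ⋃_{m≥1} C_m and t divides z_t, and 0 otherwise. Then S · ∏_{j=0}^{t−1} (1 − x_0 x_1 ⋯ x_j) · (1 − x_t^t) = 1 − ∏_{j=0}^{t−1} (1 − x_0 x_1 ⋯ x_j). -/

import Mathlib

/-- The generator `v_i ∈ ℝ^{t+1}`: coordinates `0,…,(i-1) mod t` equal `1`, the remaining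
coordinates among `0,…,t-1` equal `0`, and the last coordinate equals `((i-1) div t)·t`. -/
noncomputable def geneV (t : ℕ) (i : ℕ) : Fin (t + 1) → ℝ := fun l =>
  if (l : ℕ) = t then (((i - 1) / t) * t : ℕ)
  else if (l : ℕ) ≤ (i - 1) % t then 1 else 0

/-- The half-open simplicial cone `C_m`, generated by `v_m, …, v_{m+t}` with the facet
opposite the first generator open. -/
noncomputable def coneC (t : ℕ) (m : ℕ) : Set (Fin (t + 1) → ℝ) :=
  { x | ∃ α : Fin (t + 1) → ℝ, 0 < α 0 ∧ (∀ i, 0 ≤ α i) ∧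
      x = ∑ i : Fin (t + 1), α i • geneV t (m + (i : ℕ)) }

/-- The normal vector `u_l = -((l div t)+1)·t·e₀ + t·e_{l mod t} + e_t`. -/
noncomputable def normalU (t : ℕ) (l : ℕ) : Fin (t + 1) → ℝ := fun j =>
  (if (j : ℕ) = 0 then -(((l / t + 1) * t : ℕ) : ℝ) else 0)
    + (if (j : ℕ) = l % t then (t : ℝ) else 0)
    + (if (j : ℕ) = t then 1 else 0)

/-- Standard inner product on `ℝ^{t+1}`. -/
noncomputable def sprod {n : ℕ} (u x : Fin n → ℝ) : ℝ := ∑ j, u j * x j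

/-!
The lattice points of `⋃_{m ≥ 1} C_m` with `t ∣ z_t` are exactly the `z` with
`z₀ ≥ z₁ ≥ ⋯ ≥ z_{t-1}`, `z₀ > 0` and `t ∣ z_t`: writing `z_t = t n` and `n = q z₀ + s` with
`s < z₀`, the point lies in `C_{qt+r+1}`, where `z_{r+1} < z₀ - s ≤ z_r`.
Without the condition `z₀ > 0` this region is the free monoid on the `b_j` and `t e_t`, with
indicator series `1 / (∏ (1 - x^{b_j}) · (1 - x_t^t))`, while the points with `z₀ = 0`
contribute `1 / (1 - x_t^t)`. To avoid inverses, multiply by one factor at a time: if `A + b ⊆ A`,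
the indicator series of `A` times `1 - x^b` is the indicator series of `A \ (A + b)`, and the
factor `1 - x^{b_j}` cuts the region down to the points with `z₀ = ⋯ = z_{j+1}`.
-/

open MvPowerSeries Finset

section IndicatorSeries

variable {σ R : Type*}

noncomputable def indicatorSeries [Zero R] [One R] (A : Set (σ →₀ ℕ)) : MvPowerSeries σ R :=
  A.indicator 1

variable [Ring R]

theorem coeff_indicatorSeries (A : Set (σ →₀ ℕ)) (z : σ →₀ ℕ) :
    coeff z (indicatorSeries A : MvPowerSeries σ R) = A.indicator 1 z := rfl

theorem indicatorSeries_sdiff {A B : Set (σ →₀ ℕ)} (h : B ⊆ A) :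
    (indicatorSeries (A \ B) : MvPowerSeries σ R) = indicatorSeries A - indicatorSeries B :=
  Set.indicator_sdiff h 1

theorem indicatorSeries_singleton_zero : (indicatorSeries {0} : MvPowerSeries σ R) = 1 := by
  classical
  ext z
  simp [coeff_indicatorSeries, coeff_one, Set.indicator_apply]

theorem indicatorSeries_mul_one_sub_monomial (A : Set (σ →₀ ℕ)) (b : σ →₀ ℕ)
    (hA : ∀ z ∈ A, z + b ∈ A) :
    (indicatorSeries A : MvPowerSeries σ R) * (1 - monomial b 1) =
      indicatorSeries (A \ (· + b) '' A) := by
  classical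
  ext z
  have hmem : z ∈ (· + b) '' A ↔ b ≤ z ∧ z - b ∈ A := by
    constructor
    · rintro ⟨w, hw, rfl⟩
      simpa using hw
    · rintro ⟨hbz, hzb⟩
      exact ⟨z - b, hzb, tsub_add_cancel_of_le hbz⟩
  have hzA : b ≤ z → z - b ∈ A → z ∈ A := fun hbz hzb => by
    simpa [tsub_add_cancel_of_le hbz] using hA _ hzb
  rw [mul_sub, mul_one, map_sub, coeff_mul_monomial]
  simp only [coeff_indicatorSeries, Set.indicator_apply, Set.mem_sdiff, hmem, Pi.one_apply, mul_one]
  by_cases hbz : b ≤ z <;> by_cases hzb : z - b ∈ A <;> by_cases hz : z ∈ A <;>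
    simp_all

end IndicatorSeries

section Plateau

variable {t : ℕ}

def headSeq (t : ℕ) (z : Fin (t + 1) →₀ ℕ) (i : ℕ) : ℕ :=
  if h : i < t then z ⟨i, by omega⟩ else 0

theorem headSeq_of_lt (z : Fin (t + 1) →₀ ℕ) {i : ℕ} (hi : i < t) :
    headSeq t z i = z ⟨i, by omega⟩ :=
  dif_pos hi

theorem headSeq_of_le (z : Fin (t + 1) →₀ ℕ) {i : ℕ} (hi : t ≤ i) : headSeq t z i = 0 :=
  dif_neg (by omega)

theorem headSeq_val (z : Fin (t + 1) →₀ ℕ) {j : Fin (t + 1)} (hj : (j : ℕ) < t) :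
    headSeq t z j = z j :=
  headSeq_of_lt z hj

theorem headSeq_zero : headSeq t 0 = 0 := by
  ext i
  unfold headSeq
  split_ifs <;> rfl

theorem headSeq_add (z w : Fin (t + 1) →₀ ℕ) :
    headSeq t (z + w) = headSeq t z + headSeq t w := by
  ext i
  simp only [headSeq, Pi.add_apply]
  split_ifs <;> simp

theorem headSeq_tsub (z w : Fin (t + 1) →₀ ℕ) :
    headSeq t (z - w) = headSeq t z - headSeq t w := by
  ext i
  simp only [headSeq, Pi.sub_apply]
  split_ifs <;> simp

theorem headSeq_single_last (n : ℕ) : headSeq t (Finsupp.single (Fin.last t) n) = 0 := by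
  ext i
  simp only [headSeq, Pi.zero_apply]
  split_ifs with hi
  · rw [Finsupp.single_apply, if_neg (by simp only [Fin.ext_iff, Fin.val_last]; omega)]
  · rfl

theorem eq_zero_of_headSeq_eq_zero {z : Fin (t + 1) →₀ ℕ} (hz : headSeq t z = 0)
    (hlast : z (Fin.last t) = 0) : z = 0 := by
  ext j
  rcases (Fin.le_last j).lt_or_eq with hj | rfl
  · rw [← headSeq_val z hj, hz]
    rfl
  · exact hlast

noncomputable def prefixExp (t k : ℕ) : Fin (t + 1) →₀ ℕ :=
  ∑ i ∈ range (k + 1), Finsupp.single (Fin.ofNat (t + 1) i) 1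

theorem prod_X_eq_monomial_prefixExp {R : Type*} [CommSemiring R] (t k : ℕ) :
    ∏ i ∈ range (k + 1), (X (Fin.ofNat (t + 1) i) : MvPowerSeries (Fin (t + 1)) R) =
      monomial (prefixExp t k) 1 := by
  simp_rw [X_def]
  rw [prod_monomial, prod_const_one]
  rfl

theorem prefixExp_apply {k : ℕ} (hk : k < t) (j : Fin (t + 1)) :
    prefixExp t k j = if (j : ℕ) ≤ k then 1 else 0 := by
  classical
  have hof : ∀ i ∈ range (k + 1), Fin.ofNat (t + 1) i = j ↔ i = j := fun i hi => by
    rw [Fin.ext_iff, Fin.val_ofNat, Nat.mod_eq_of_lt (by have := mem_range.mp hi; omega)]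
  rw [prefixExp, Finsupp.finsetSum_apply]
  simp_rw [Finsupp.single_apply]
  rw [sum_congr rfl fun i hi => if_congr (hof i hi) rfl rfl, sum_ite_eq']
  simp

theorem prefixExp_last {k : ℕ} (hk : k < t) : prefixExp t k (Fin.last t) = 0 := by
  rw [prefixExp_apply hk, if_neg (by rw [Fin.val_last]; omega)]

theorem headSeq_prefixExp {k : ℕ} (hk : k < t) :
    headSeq t (prefixExp t k) = fun i => if i ≤ k then 1 else 0 := by
  ext i
  rcases lt_or_ge i t with hi | hi
  · rw [headSeq_of_lt _ hi, prefixExp_apply hk]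
  · rw [headSeq_of_le _ hi, if_neg (by omega)]

/-- `z₀ ≥ ⋯ ≥ z_{t-1}`, `z₀ = ⋯ = z_k` and `t ∣ z_t`, where `z_t` counts as `0` in the middle
condition; so `plateau t t` consists of the multiples of `t e_t`. -/
def plateau (t k : ℕ) : Set (Fin (t + 1) →₀ ℕ) :=
  {z | Antitone (headSeq t z) ∧ headSeq t z k = headSeq t z 0 ∧ t ∣ z (Fin.last t)}

theorem plateau_self_subset_plateau_zero : plateau t t ⊆ plateau t 0 :=
  fun _ ⟨hanti, _, hdvd⟩ => ⟨hanti, rfl, hdvd⟩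

theorem headSeq_eq_zero_of_mem_plateau_self {z : Fin (t + 1) →₀ ℕ} (hz : z ∈ plateau t t) :
    headSeq t z = 0 := by
  obtain ⟨hanti, htop, -⟩ := hz
  ext i
  have := hanti (Nat.zero_le i)
  rw [← htop, headSeq_of_le z le_rfl] at this
  exact Nat.le_zero.mp this

theorem add_prefixExp_mem_plateau {k : ℕ} (hk : k < t) {z : Fin (t + 1) →₀ ℕ}
    (hz : z ∈ plateau t k) : z + prefixExp t k ∈ plateau t k := by
  obtain ⟨hanti, hflat, hdvd⟩ := hz
  refine ⟨?_, ?_, ?_⟩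
  · rw [headSeq_add, headSeq_prefixExp hk]
    exact hanti.add fun i j hij => by split_ifs <;> omega
  · simp [headSeq_add, headSeq_prefixExp hk, hflat]
  · rwa [Finsupp.add_apply, prefixExp_last hk, add_zero]

theorem prefixExp_le_and_tsub_mem_plateau {k : ℕ} (hk : k < t) {z : Fin (t + 1) →₀ ℕ}
    (hz : z ∈ plateau t k) (hlt : headSeq t z (k + 1) < headSeq t z k) :
    prefixExp t k ≤ z ∧ z - prefixExp t k ∈ plateau t k := by
  obtain ⟨hanti, hflat, hdvd⟩ := hz
  refine ⟨fun j => ?_, ?_, ?_, ?_⟩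
  · rw [prefixExp_apply hk]
    split_ifs with hj
    · have := hanti hj
      rw [headSeq_val z (by omega)] at this
      omega
    · exact Nat.zero_le _
  · rw [headSeq_tsub, headSeq_prefixExp hk]
    refine antitone_nat_of_succ_le fun n => ?_
    have := hanti (n.le_add_right 1)
    simp only [Pi.sub_apply]
    rcases lt_trichotomy n k with h | rfl | h
    · rw [if_pos (show n + 1 ≤ k from h), if_pos h.le]
      omega
    · rw [if_neg (by omega), if_pos le_rfl]
      omega
    · rw [if_neg (by omega), if_neg (by omega)]
      omega
  · simp [headSeq_tsub, headSeq_prefixExp hk, hflat]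
  · rwa [Finsupp.tsub_apply, prefixExp_last hk, tsub_zero]

theorem plateau_succ {k : ℕ} (hk : k < t) :
    plateau t (k + 1) = plateau t k \ (· + prefixExp t k) '' plateau t k := by
  ext z
  constructor
  · rintro ⟨hanti, hflat, hdvd⟩
    have hflat' : headSeq t z k = headSeq t z 0 :=
      le_antisymm (hanti (Nat.zero_le k)) (hflat ▸ hanti (k.le_add_right 1))
    refine ⟨⟨hanti, hflat', hdvd⟩, ?_⟩
    rintro ⟨w, ⟨hw, -, -⟩, rfl⟩
    have := hw (k.le_add_right 1)
    simp only [headSeq_add, headSeq_prefixExp hk, Pi.add_apply, if_pos le_rfl,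
      if_pos (Nat.zero_le k), if_neg (Nat.not_succ_le_self k)] at hflat hflat'
    omega
  · rintro ⟨hz, hnot⟩
    refine ⟨hz.1, ?_, hz.2.2⟩
    by_contra hne
    have hlt : headSeq t z (k + 1) < headSeq t z k :=
      lt_of_le_of_ne (hz.1 (k.le_add_right 1)) fun h => hne (h.trans hz.2.1)
    obtain ⟨hle, hmem⟩ := prefixExp_le_and_tsub_mem_plateau hk hz hlt
    exact hnot ⟨z - prefixExp t k, hmem, tsub_add_cancel_of_le hle⟩

theorem add_single_last_mem_plateau {k : ℕ} {z : Fin (t + 1) →₀ ℕ} (hz : z ∈ plateau t k) :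
    z + Finsupp.single (Fin.last t) t ∈ plateau t k := by
  have hhead : headSeq t (z + Finsupp.single (Fin.last t) t) = headSeq t z := by
    rw [headSeq_add, headSeq_single_last, add_zero]
  obtain ⟨hanti, hflat, hdvd⟩ := hz
  refine ⟨hhead ▸ hanti, hhead ▸ hflat, ?_⟩
  simpa using hdvd

theorem plateau_self_sdiff (ht : 1 ≤ t) :
    plateau t t \ (· + Finsupp.single (Fin.last t) t) '' plateau t t = {0} := by
  ext z
  simp only [Set.mem_sdiff, Set.mem_singleton_iff]
  constructor
  · rintro ⟨hz, hnot⟩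
    refine eq_zero_of_headSeq_eq_zero (headSeq_eq_zero_of_mem_plateau_self hz) ?_
    by_contra hlast
    obtain ⟨hanti, htop, hdvd⟩ := hz
    have hle : Finsupp.single (Fin.last t) t ≤ z :=
      Finsupp.single_le_iff.mpr (Nat.le_of_dvd (Nat.pos_of_ne_zero hlast) hdvd)
    have hhead : headSeq t (z - Finsupp.single (Fin.last t) t) = headSeq t z := by
      rw [headSeq_tsub, headSeq_single_last, tsub_zero]
    refine hnot ⟨z - Finsupp.single (Fin.last t) t, ⟨hhead ▸ hanti, hhead ▸ htop, ?_⟩,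
      tsub_add_cancel_of_le hle⟩
    simpa using Nat.dvd_sub hdvd dvd_rfl
  · rintro rfl
    refine ⟨⟨headSeq_zero ▸ antitone_const, by rw [headSeq_zero]; rfl, dvd_zero t⟩, ?_⟩
    rintro ⟨w, -, hw⟩
    have := DFunLike.congr_fun hw (Fin.last t)
    rw [Finsupp.add_apply, Finsupp.single_eq_same, Finsupp.coe_zero, Pi.zero_apply] at this
    omega

theorem indicatorSeries_plateau_zero_mul_prod {k : ℕ} (hk : k ≤ t) :
    (indicatorSeries (plateau t 0) : MvPowerSeries (Fin (t + 1)) ℤ) *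
        ∏ j ∈ range k, (1 - monomial (prefixExp t j) 1) = indicatorSeries (plateau t k) := by
  induction k with
  | zero => simp
  | succ k ih =>
    rw [prod_range_succ, ← mul_assoc, ih (by omega), indicatorSeries_mul_one_sub_monomial
      _ _ fun _ => add_prefixExp_mem_plateau (by omega), plateau_succ (by omega)]

theorem indicatorSeries_plateau_self_mul (ht : 1 ≤ t) :
    (indicatorSeries (plateau t t) : MvPowerSeries (Fin (t + 1)) ℤ) *
        (1 - monomial (Finsupp.single (Fin.last t) t) 1) = 1 := by
  rw [indicatorSeries_mul_one_sub_monomial _ _ fun _ => add_single_last_mem_plateau,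
    plateau_self_sdiff ht, indicatorSeries_singleton_zero]

end Plateau

section Cones

variable {t : ℕ}

theorem geneV_of_lt {l : Fin (t + 1)} (hl : (l : ℕ) < t) (i : ℕ) :
    geneV t i l = if (l : ℕ) ≤ (i - 1) % t then 1 else 0 :=
  if_neg hl.ne

theorem geneV_last (i : ℕ) : geneV t i (Fin.last t) = (((i - 1) / t * t : ℕ) : ℝ) :=
  if_pos rfl

theorem sum_smul_geneV_apply_of_lt (α : Fin (t + 1) → ℝ) (m : ℕ) {l : Fin (t + 1)}
    (hl : (l : ℕ) < t) :
    (∑ i : Fin (t + 1), α i • geneV t (m + i)) l =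
      ∑ i : Fin (t + 1), α i * if (l : ℕ) ≤ (m + i - 1) % t then 1 else 0 := by
  simp [Finset.sum_apply, geneV_of_lt hl]

theorem sum_smul_geneV_apply_last (α : Fin (t + 1) → ℝ) (m : ℕ) :
    (∑ i : Fin (t + 1), α i • geneV t (m + i)) (Fin.last t) =
      ∑ i : Fin (t + 1), α i * (((m + i - 1) / t * t : ℕ) : ℝ) := by
  simp [Finset.sum_apply, geneV_last]

theorem antitone_headSeq_of_mem_coneC (ht : 1 ≤ t) {z : Fin (t + 1) →₀ ℕ} {m : ℕ}
    (hz : (fun j => (z j : ℝ)) ∈ coneC t m) :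
    Antitone (headSeq t z) ∧ 0 < headSeq t z 0 := by
  obtain ⟨α, hα0, hα, hzα⟩ := hz
  have hcoord : ∀ l (hl : l < t), (headSeq t z l : ℝ) =
      ∑ i : Fin (t + 1), α i * if l ≤ (m + i - 1) % t then 1 else 0 := fun l hl => by
    rw [headSeq_of_lt z hl, ← sum_smul_geneV_apply_of_lt α m (l := ⟨l, by omega⟩) hl, ← hzα]
  constructor
  · refine antitone_nat_of_succ_le fun n => ?_
    rcases lt_or_ge (n + 1) t with hn | hn
    · have : (headSeq t z (n + 1) : ℝ) ≤ headSeq t z n := by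
        rw [hcoord _ hn, hcoord _ (by omega)]
        refine sum_le_sum fun i _ => mul_le_mul_of_nonneg_left ?_ (hα i)
        split_ifs <;> norm_num
        omega
      exact_mod_cast this
    · rw [headSeq_of_le z hn]
      exact Nat.zero_le _
  · have : (0 : ℝ) < headSeq t z 0 := by
      simp only [hcoord 0 ht, Nat.zero_le, if_true, mul_one]
      exact hα0.trans_le (single_le_sum (fun i _ => hα i) (mem_univ 0))
    exact_mod_cast this

theorem exists_lt_le_of_le_of_lt {h : ℕ → ℕ} {y n : ℕ} (h0 : y ≤ h 0) (hn : h n < y) :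
    ∃ r < n, h (r + 1) < y ∧ y ≤ h r := by
  induction n with
  | zero => omega
  | succ n ih =>
    by_cases hy : y ≤ h n
    · exact ⟨n, n.lt_add_one, hn, hy⟩
    · obtain ⟨r, hr, h1, h2⟩ := ih (by omega)
      exact ⟨r, by omega, h1, h2⟩

theorem sum_range_add_mod {M : Type*} [AddCommMonoid M] (t r : ℕ) (F : ℕ → M) :
    ∑ i ∈ range t, F ((r + i) % t) = ∑ i ∈ range t, F i := by
  rcases t.eq_zero_or_pos with rfl | ht
  · simp
  have : NeZero t := ⟨ht.ne'⟩
  rw [← Fin.sum_univ_eq_sum_range (fun i => F ((r + i) % t)), ← Fin.sum_univ_eq_sum_range F]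
  calc ∑ i : Fin t, F ((r + i) % t) = ∑ i : Fin t, F ↑(Fin.ofNat t r + i) := by
        simp only [Fin.val_add, Fin.val_ofNat, Nat.mod_add_mod]
    _ = ∑ i : Fin t, F i := Equiv.sum_comp (Equiv.addLeft (Fin.ofNat t r)) (fun i : Fin t => F i)

/-- The indices `0` and `t` both sit at residue `r`, so they may share the weight `c r`. -/
theorem sum_range_succ_mul_add_mod {t r : ℕ} (ht : 1 ≤ t) {w c : ℕ → ℝ}
    (hw0 : w 0 + w t = c (r % t)) (hw : ∀ i, 0 < i → i < t → w i = c ((r + i) % t))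
    (F : ℕ → ℝ) :
    ∑ i ∈ range (t + 1), w i * F ((r + i) % t) = ∑ ρ ∈ range t, c ρ * F ρ := by
  have hsplit : ∀ i ∈ range t, w i = c ((r + i) % t) - if i = 0 then w t else 0 := by
    intro i hi
    rcases i.eq_zero_or_pos with rfl | hi0
    · simp only [add_zero, if_true]
      linarith
    · rw [if_neg hi0.ne', sub_zero, hw i hi0 (mem_range.mp hi)]
  rw [sum_range_succ, sum_congr rfl fun i hi => by rw [hsplit i hi],
    ← sum_range_add_mod t r fun ρ => c ρ * F ρ]
  simp only [sub_mul, sum_sub_distrib, ite_mul, zero_mul, sum_ite_eq', mem_range,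
    if_pos (show 0 < t by omega), add_zero, Nat.add_mod_right]
  ring

theorem sum_range_sub_mul_ite_le (h : ℕ → ℝ) {a n : ℕ} (ha : a ≤ n) :
    ∑ ρ ∈ range n, (h ρ - h (ρ + 1)) * (if a ≤ ρ then 1 else 0) = h a - h n := by
  simp only [mul_ite, mul_one, mul_zero]
  rw [← sum_filter, show (range n).filter (a ≤ ·) = Ico a n by
    ext; simp only [mem_filter, mem_range, mem_Ico]; omega]
  rw [← neg_sub, ← sum_Ico_sub h ha, ← sum_neg_distrib]
  simp

theorem sum_range_sub_mul_ite_lt (h : ℕ → ℝ) {b n : ℕ} (hb : b ≤ n) :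
    ∑ ρ ∈ range n, (h ρ - h (ρ + 1)) * (if ρ < b then 1 else 0) = h 0 - h b := by
  simp only [mul_ite, mul_one, mul_zero]
  rw [← sum_filter, show (range n).filter (· < b) = range b by
    ext; simp only [mem_filter, mem_range]; omega, sum_range_sub']

theorem add_div_eq_ite {t r i : ℕ} (hr : r < t) (hi : i ≤ t) :
    (r + i) / t = (if (r + i) % t < r then 1 else 0) + if i = t then 1 else 0 := by
  have ht : 0 < t := by omega
  rcases hi.lt_or_eq with hi | rfl
  · rw [if_neg hi.ne]
    rcases lt_or_ge (r + i) t with hri | hri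
    · rw [Nat.div_eq_of_lt hri, Nat.mod_eq_of_lt hri, if_neg (by omega)]
    · obtain ⟨k, hk⟩ : ∃ k, r + i = k + t := ⟨r + i - t, by omega⟩
      rw [hk, Nat.add_div_right _ ht, Nat.add_mod_right, Nat.div_eq_of_lt (by omega),
        Nat.mod_eq_of_lt (by omega), if_pos (by omega)]
  · rw [Nat.add_div_right _ ht, Nat.add_mod_right, Nat.div_eq_of_lt hr, Nat.mod_eq_of_lt hr]
    simp

theorem mem_coneC_of_weights {q r : ℕ} (hr : r < t) {w : ℕ → ℝ} (hw0 : 0 < w 0)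
    (hw : ∀ i, 0 ≤ w i) {x : Fin (t + 1) → ℝ}
    (hx : ∀ l : Fin (t + 1), (l : ℕ) < t →
      x l = ∑ i ∈ range (t + 1), w i * if (l : ℕ) ≤ (r + i) % t then 1 else 0)
    (hlast : x (Fin.last t) = t * (q * ∑ i ∈ range (t + 1), w i +
      ∑ i ∈ range (t + 1), w i * (if (r + i) % t < r then 1 else 0) + w t)) :
    x ∈ coneC t (q * t + r + 1) := by
  have hshift : ∀ i, q * t + r + 1 + i - 1 = r + i + q * t := fun i => by omega
  refine ⟨fun i => w i, hw0, fun i => hw i, funext fun l => ?_⟩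
  rcases (Fin.le_last l).lt_or_eq with hl | rfl
  · replace hl : (l : ℕ) < t := hl
    rw [sum_smul_geneV_apply_of_lt _ _ hl, Fin.sum_univ_eq_sum_range
      (fun i => w i * if (l : ℕ) ≤ (q * t + r + 1 + i - 1) % t then 1 else 0), hx l hl]
    simp only [hshift, Nat.add_mul_mod_self_right]
  · have hterm : ∀ i ∈ range (t + 1), w i * (((q * t + r + 1 + i - 1) / t * t : ℕ) : ℝ) =
        t * (q * w i + w i * (if (r + i) % t < r then 1 else 0) + if i = t then w i else 0) := by
      intro i hi
      rw [hshift, Nat.add_mul_div_right _ _ (by omega : 0 < t),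
        add_div_eq_ite hr (Nat.lt_succ_iff.mp (mem_range.mp hi))]
      split_ifs <;> push_cast <;> ring
    rw [sum_smul_geneV_apply_last, Fin.sum_univ_eq_sum_range
      (fun i => w i * (((q * t + r + 1 + i - 1) / t * t : ℕ) : ℝ)), hlast, sum_congr rfl hterm,
      ← mul_sum, sum_add_distrib, sum_add_distrib, ← mul_sum, sum_ite_eq',
      if_pos (self_mem_range_succ t)]

theorem exists_mem_coneC (ht : 1 ≤ t) {z : Fin (t + 1) →₀ ℕ} (hanti : Antitone (headSeq t z))
    (hpos : 0 < headSeq t z 0) (hdvd : t ∣ z (Fin.last t)) :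
    ∃ m, 1 ≤ m ∧ (fun j => (z j : ℝ)) ∈ coneC t m := by
  set h := headSeq t z with hh
  obtain ⟨n, hn⟩ := hdvd
  have hs : n % h 0 < h 0 := Nat.mod_lt _ hpos
  have hht : h t = 0 := headSeq_of_le z le_rfl
  obtain ⟨r, hrt, hr1, hr⟩ := exists_lt_le_of_le_of_lt (h := h) (y := h 0 - n % h 0) (n := t)
    (by omega) (by omega)
  set c : ℕ → ℝ := fun ρ => (h ρ : ℝ) - h (ρ + 1)
  set w : ℕ → ℝ := fun i => if i = 0 then ((h 0 - n % h 0 : ℕ) : ℝ) - h (r + 1)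
    else if i = t then (h r : ℝ) - (h 0 - n % h 0 : ℕ) else c ((r + i) % t)
  have hsum : ∀ F : ℕ → ℝ,
      ∑ i ∈ range (t + 1), w i * F ((r + i) % t) = ∑ ρ ∈ range t, c ρ * F ρ :=
    sum_range_succ_mul_add_mod ht (by simp [w, c, Nat.mod_eq_of_lt hrt, show t ≠ 0 by omega])
      fun i hi0 hit => by simp [w, hi0.ne', hit.ne]
  have hw0 : 0 < w 0 := by
    have : (h (r + 1) : ℝ) < ((h 0 - n % h 0 : ℕ) : ℝ) := by exact_mod_cast hr1
    simpa [w] using this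
  have hw : ∀ i, 0 ≤ w i := fun i => by
    simp only [w]
    split_ifs
    · exact hw0.le
    · exact sub_nonneg.mpr (by exact_mod_cast hr)
    · exact sub_nonneg.mpr (by exact_mod_cast hanti (Nat.le_add_right _ 1))
  refine ⟨n / h 0 * t + r + 1, by omega, mem_coneC_of_weights hrt hw0 hw (fun l hl => ?_) ?_⟩
  · rw [hsum fun x => if (l : ℕ) ≤ x then 1 else 0, sum_range_sub_mul_ite_le _ hl.le, hht,
      hh, headSeq_val z hl, Nat.cast_zero, sub_zero]
  · have htotal := hsum fun _ => 1
    simp only [mul_one] at htotal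
    rw [htotal, sum_range_sub', hsum fun x => if x < r then 1 else 0,
      sum_range_sub_mul_ite_lt _ hrt.le, hn]
    have hnqs : (n : ℝ) = h 0 * (n / h 0 : ℕ) + (n % h 0 : ℕ) := by
      exact_mod_cast (Nat.div_add_mod n (h 0)).symm
    have hwt : w t = h r - (h 0 - (n % h 0 : ℕ)) := by
      simp only [w, if_neg (show t ≠ 0 by omega), if_true, Nat.cast_sub hs.le]
    rw [hwt, hht, Nat.cast_mul, hnqs]
    ring

theorem mem_cone_union_iff (ht : 1 ≤ t) (z : Fin (t + 1) →₀ ℕ) :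
    ((∃ m : ℕ, 1 ≤ m ∧ (fun j => (z j : ℝ)) ∈ coneC t m) ∧ t ∣ z (Fin.last t)) ↔
      z ∈ plateau t 0 \ plateau t t := by
  constructor
  · rintro ⟨⟨m, -, hm⟩, hdvd⟩
    obtain ⟨hanti, hpos⟩ := antitone_headSeq_of_mem_coneC ht hm
    refine ⟨⟨hanti, rfl, hdvd⟩, fun hz => ?_⟩
    rw [headSeq_eq_zero_of_mem_plateau_self hz] at hpos
    exact hpos.false
  · rintro ⟨⟨hanti, -, hdvd⟩, hnot⟩
    have hpos : 0 < headSeq t z 0 := by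
      by_contra h0
      refine hnot ⟨hanti, ?_, hdvd⟩
      rw [headSeq_of_le z le_rfl]
      omega
    exact ⟨exists_mem_coneC ht hanti hpos hdvd, hdvd⟩

end Cones

open scoped Classical in
/-- Multivariate version: if `S ∈ ℤ⟦x₀,…,x_t⟧` is the indicator series of the lattice
points of `Λ = ℤ^t × tℤ` in `⋃_{m≥1} C_m`, then
`S · ∏_{j=0}^{t-1} (1 - x₀x₁⋯x_j) · (1 - x_t^t) = 1 - ∏_{j=0}^{t-1} (1 - x₀x₁⋯x_j)`. -/
theorem multivariate_generating_function_identity (t : ℕ) (ht : 1 ≤ t)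
    (S : MvPowerSeries (Fin (t + 1)) ℤ)
    (hS : ∀ z : Fin (t + 1) →₀ ℕ,
      MvPowerSeries.coeff (R := ℤ) z S =
        if (∃ m : ℕ, 1 ≤ m ∧ (fun j => (z j : ℝ)) ∈ coneC t m) ∧ t ∣ z (Fin.last t)
        then 1 else 0) :
    S * (∏ j ∈ Finset.range t,
          (1 - ∏ i ∈ Finset.range (j + 1), MvPowerSeries.X (Fin.ofNat (t + 1) i)))
        * (1 - MvPowerSeries.X (Fin.last t) ^ t)
      = 1 - ∏ j ∈ Finset.range t,
          (1 - ∏ i ∈ Finset.range (j + 1), MvPowerSeries.X (Fin.ofNat (t + 1) i)) := by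
  have hS' : S = indicatorSeries (plateau t 0 \ plateau t t) := by
    ext z
    simp only [hS, coeff_indicatorSeries, Set.indicator_apply, mem_cone_union_iff ht, Pi.one_apply]
  simp_rw [prod_X_eq_monomial_prefixExp, X_pow_eq]
  rw [hS', indicatorSeries_sdiff plateau_self_subset_plateau_zero]
  linear_combination (1 - monomial (Finsupp.single (Fin.last t) t) (1 : ℤ)) *
      indicatorSeries_plateau_zero_mul_prod (t := t) le_rfl +
    (1 - ∏ j ∈ range t, (1 - monomial (prefixExp t j) (1 : ℤ))) *
      indicatorSeries_plateau_self_mul ht
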